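/- arXiv:2202.13187 — 3 statements merged into one kernel-verified Lean document; each statement's English description precedes it below -/
import Mathlib

section
/- Let $D(W) \subseteq \{0,1,\ldots\}$ be the set of thresholds/states where the passive action is optimal for Lagrange multiplier $W$, defined via $D(W) = \{s : s \le R^*(W)\}$ where $R^*(W) \in \arg\min_R (c_R - W b_R)$ with $b_R$ strictly increasing in $R$. Then $W \le W'$ implies every minimizing threshold for $W'$ is at least as large as some minimizing threshold for $W$; in particular $D(W) \subseteq D(W')$ can be achieved by selecting the largest minimizers (indexability). -/
/-- Indexability: if `Rstar W` is the largest minimizer of `R ↦ c R - W * b R` with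
`b` strictly increasing, then `W ≤ W'` implies `Rstar W ≤ Rstar W'`, and hence the
passive sets `{s | s ≤ Rstar W}` are monotone non-decreasing in `W`. -/
theorem stmt1 {N : ℕ} (c b : Fin N → ℝ) (hb : StrictMono b)
    (Rstar : ℝ → Fin N)
    (hmin : ∀ W : ℝ, ∀ R : Fin N, c (Rstar W) - W * b (Rstar W) ≤ c R - W * b R)
    (hlargest : ∀ W : ℝ, ∀ R : Fin N,
      c R - W * b R = c (Rstar W) - W * b (Rstar W) → R ≤ Rstar W)
    (W W' : ℝ) (hWW' : W ≤ W') :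
    Rstar W ≤ Rstar W' ∧ {s : Fin N | s ≤ Rstar W} ⊆ {s : Fin N | s ≤ Rstar W'} := by
  set A := Rstar W with hA
  set B := Rstar W' with hB
  have key : A ≤ B := by
    by_contra h
    push_neg at h   -- h : B < A
    have hbBA : b B < b A := hb h
    have h1 := hmin W B    -- c A - W bA ≤ c B - W bB
    have h2 := hmin W' A   -- c B - W' bB ≤ c A - W' bA
    have hsum : (W' - W) * (b A - b B) ≤ 0 := by nlinarith
    have hWeq : W = W' := by nlinarith
    subst hWeq
    have heq : c A - W * b A = c B - W * b B := le_antisymm h1 h2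
    exact absurd (hlargest W A heq) (not_le.mpr h)
  exact ⟨key, fun s hs => le_trans hs key⟩
end

section
/- Let $(\theta_n, W_n)$ be generated by the coupled stochastic recursions $\theta_{n+1} = \theta_n + \gamma_n[h(\theta_n, W_n) + \xi_{n+1}]$ and $W_{n+1} = W_n + \eta_n g(\theta_n, W_n)$. Suppose: (i) there is a map $f$ with $h(f(W), W) = 0$ for all $W$, $f$ is $L_f$-Lipschitz, $h$ is $L_h$-Lipschitz in both arguments; (ii) $(\theta - f(W))^\top h(\theta, W) \le -\mu_1 \|\theta - f(W)\|^2$; (iii) $\mathbb{E}[\xi_{n+1} | \mathcal{F}_n] = 0$ and $\mathbb{E}[\|\xi_{n+1}\|^2 | \mathcal{F}_n] \le \Lambda$; (iv) $g$ is $L_g$-Lipschitz and $g(f(W^*), W^*) = 0$ for a fixed point $W^*$. Then with $\tilde\theta_n = \theta_n - f(W_n)$ and $\tilde W_n = W_n - W^*$: $\mathbb{E}[\|\tilde\theta_{n+1}\|^2 | \mathcal{F}_n] \le \gamma_n^2 \Lambda + (1 - 2\gamma_n\mu_1 + L_h^2\gamma_n^2)\|\tilde\theta_n\|^2 + 2L_f^2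 L_g^2 \eta_n^2 \|\tilde\theta_n\|^2 + 2L_f^2 L_g^2 (L_f+1)^2 \eta_n^2 \|\tilde W_n\|^2 + (L_f^2 \gamma_n^2 + \frac{2(1+L_h\gamma_n)^2 \eta_n^2 L_g^2}{\gamma_n^2})\|\tilde\theta_n\|^2 + \frac{2(1+L_h\gamma_n)^2 \eta_n^2 L_g^2 (L_f+1)^2}{\gamma_n^2} \|\tilde W_n\|^2$. -/
/-!
With `x = θ - f W`, the next error is `(x + γ • h θ W) + (f W - f (W + η g θ W)) + γ • ξ`. Averaging
over the noise kills the cross term with `ξ`, leaving `γ² 𝔼‖ξ‖²`. The first summand is a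
contracted copy of `x` (dissipativity plus Lipschitz continuity of `h`, which vanishes at
`f W`), the second is controlled by `Lf η |g θ W|`, and `|g θ W|` is compared with the errors
through the root `g (f W*) W* = 0`. The cross term between the two deterministic summands is
split by Young's inequality with weight `γ²`, which produces the `1 / γ²` terms.
-/

open MeasureTheory

lemma norm_add_smul_le_of_norm_le {E : Type*} [SeminormedAddCommGroup E] [NormedSpace ℝ E]
    {x v : E} {L γ : ℝ} (hγ : 0 ≤ γ) (hv : ‖v‖ ≤ L * ‖x‖) :
    ‖x + γ • v‖ ≤ (1 + L * γ) * ‖x‖ :=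
  calc ‖x + γ • v‖ ≤ ‖x‖ + γ * ‖v‖ := by
        simpa [norm_smul, abs_of_nonneg hγ] using norm_add_le x (γ • v)
    _ ≤ ‖x‖ + γ * (L * ‖x‖) := by gcongr
    _ = (1 + L * γ) * ‖x‖ := by ring

lemma norm_add_sq_le_of_norm_mul_norm_le {E : Type*} [SeminormedAddCommGroup E] {x y : E}
    {u v ε : ℝ} (hε : 0 < ε) (hxy : ‖x‖ * ‖y‖ ≤ u * v) :
    ‖x + y‖ ^ 2 ≤ ‖x‖ ^ 2 + ‖y‖ ^ 2 + ε * u ^ 2 + ε⁻¹ * v ^ 2 := by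
  have hyoung := two_mul_le_add_mul_sq (a := u) (b := v) hε
  have htri := pow_le_pow_left₀ (norm_nonneg _) (norm_add_le x y) 2
  nlinarith

lemma sq_abs_le_of_lipschitz_of_root {E : Type*} [SeminormedAddCommGroup E] {f : ℝ → E}
    {g : E → ℝ → ℝ} {Lf Lg : ℝ} (hLg : 0 ≤ Lg)
    (hfLip : ∀ W W' : ℝ, ‖f W - f W'‖ ≤ Lf * |W - W'|)
    (hgLip : ∀ (θ θ' : E) (W W' : ℝ), |g θ W - g θ' W'| ≤ Lg * (‖θ - θ'‖ + |W - W'|))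
    {Wstar : ℝ} (hWstar : g (f Wstar) Wstar = 0) (θ : E) (W : ℝ) :
    |g θ W| ^ 2 ≤ 2 * Lg ^ 2 * (‖θ - f W‖ ^ 2 + (Lf + 1) ^ 2 * |W - Wstar| ^ 2) := by
  have hθ : ‖θ - f Wstar‖ ≤ ‖θ - f W‖ + Lf * |W - Wstar| :=
    calc ‖θ - f Wstar‖ = ‖(θ - f W) + (f W - f Wstar)‖ := by rw [sub_add_sub_cancel]
      _ ≤ ‖θ - f W‖ + Lf * |W - Wstar| :=
          (norm_add_le _ _).trans (by gcongr; exact hfLip W Wstar)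
  have hg : |g θ W| ≤ Lg * (‖θ - f W‖ + (Lf + 1) * |W - Wstar|) :=
    calc |g θ W| = |g θ W - g (f Wstar) Wstar| := by rw [hWstar, sub_zero]
      _ ≤ Lg * (‖θ - f Wstar‖ + |W - Wstar|) := hgLip _ _ _ _
      _ ≤ Lg * (‖θ - f W‖ + Lf * |W - Wstar| + |W - Wstar|) := by gcongr
      _ = Lg * (‖θ - f W‖ + (Lf + 1) * |W - Wstar|) := by ring
  calc |g θ W| ^ 2 ≤ (Lg * (‖θ - f W‖ + (Lf + 1) * |W - Wstar|)) ^ 2 :=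
        pow_le_pow_left₀ (abs_nonneg _) hg 2
    _ = Lg ^ 2 * (‖θ - f W‖ + (Lf + 1) * |W - Wstar|) ^ 2 := mul_pow _ _ _
    _ ≤ Lg ^ 2 * (2 * (‖θ - f W‖ ^ 2 + ((Lf + 1) * |W - Wstar|) ^ 2)) := by
        gcongr; exact add_sq_le
    _ = 2 * Lg ^ 2 * (‖θ - f W‖ ^ 2 + (Lf + 1) ^ 2 * |W - Wstar| ^ 2) := by ring

lemma norm_add_smul_sq_le_of_inner_le {E : Type*} [NormedAddCommGroup E] [InnerProductSpace ℝ E]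
    {x v : E} {μ L γ : ℝ} (hγ : 0 ≤ γ)
    (hinner : inner ℝ x v ≤ -μ * ‖x‖ ^ 2) (hv : ‖v‖ ≤ L * ‖x‖) :
    ‖x + γ • v‖ ^ 2 ≤ (1 - 2 * γ * μ + L ^ 2 * γ ^ 2) * ‖x‖ ^ 2 := by
  have hv2 : ‖v‖ ^ 2 ≤ L ^ 2 * ‖x‖ ^ 2 := by
    simpa [mul_pow] using pow_le_pow_left₀ (norm_nonneg v) hv 2
  rw [norm_add_sq_real, real_inner_smul_right, norm_smul, Real.norm_eq_abs, mul_pow, sq_abs]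
  nlinarith [mul_le_mul_of_nonneg_left hinner hγ, mul_le_mul_of_nonneg_left hv2 (sq_nonneg γ)]

lemma integral_norm_add_smul_sq {E : Type*} [NormedAddCommGroup E] [InnerProductSpace ℝ E]
    [CompleteSpace E] {Ω : Type*} [MeasurableSpace Ω] (μ : Measure Ω) [IsProbabilityMeasure μ]
    (a : E) (c : ℝ) {ξ : Ω → E} (hξint : Integrable ξ μ)
    (hξsq : Integrable (fun ω => ‖ξ ω‖ ^ 2) μ) (hξmean : ∫ ω, ξ ω ∂μ = 0) :
    ∫ ω, ‖a + c • ξ ω‖ ^ 2 ∂μ = ‖a‖ ^ 2 + c ^ 2 * ∫ ω, ‖ξ ω‖ ^ 2 ∂μ := by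
  have hexpand : ∀ ω, ‖a + c • ξ ω‖ ^ 2
      = ‖a‖ ^ 2 + 2 * c * inner ℝ a (ξ ω) + c ^ 2 * ‖ξ ω‖ ^ 2 := fun ω => by
    rw [norm_add_sq_real, real_inner_smul_right, norm_smul, Real.norm_eq_abs, mul_pow, sq_abs]
    ring
  have hcross : Integrable (fun ω => 2 * c * inner ℝ a (ξ ω)) μ :=
    (hξint.const_inner a).const_mul _
  have hfirst : Integrable (fun ω => ‖a‖ ^ 2 + 2 * c * inner ℝ a (ξ ω)) μ :=
    (integrable_const _).add hcross
  simp_rw [hexpand]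
  rw [integral_add hfirst (hξsq.const_mul _), integral_add (integrable_const _) hcross,
    integral_const, integral_const_mul, integral_const_mul, integral_inner hξint, hξmean]
  simp

theorem stmt6_general {E : Type*} [NormedAddCommGroup E] [InnerProductSpace ℝ E] [CompleteSpace E]
    {Ω : Type*} [MeasurableSpace Ω] (μ : Measure Ω) [IsProbabilityMeasure μ]
    (f : ℝ → E) (h : E → ℝ → E) (g : E → ℝ → ℝ)
    (Lf Lh Lg μ1 Λ γ η : ℝ) (hγ : 0 < γ)
    (hLg : 0 ≤ Lg)
    (hroot : ∀ W : ℝ, h (f W) W = 0)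
    (hfLip : ∀ W W' : ℝ, ‖f W - f W'‖ ≤ Lf * |W - W'|)
    (hhLip : ∀ (θ θ' : E) (W W' : ℝ),
      ‖h θ W - h θ' W'‖ ≤ Lh * (‖θ - θ'‖ + |W - W'|))
    (hdrift : ∀ (θ : E) (W : ℝ),
      (inner ℝ (θ - f W) (h θ W) : ℝ) ≤ -μ1 * ‖θ - f W‖ ^ 2)
    (hgLip : ∀ (θ θ' : E) (W W' : ℝ),
      |g θ W - g θ' W'| ≤ Lg * (‖θ - θ'‖ + |W - W'|))
    (Wstar : ℝ) (hWstar : g (f Wstar) Wstar = 0)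
    (θ : E) (W : ℝ) (ξ : Ω → E)
    (hξint : Integrable ξ μ) (hξsq : Integrable (fun ω => ‖ξ ω‖ ^ 2) μ)
    (hξmean : ∫ ω, ξ ω ∂μ = 0) (hξvar : ∫ ω, ‖ξ ω‖ ^ 2 ∂μ ≤ Λ) :
    ∫ ω, ‖(θ + γ • (h θ W + ξ ω)) - f (W + η * g θ W)‖ ^ 2 ∂μ ≤
      γ ^ 2 * Λ + (1 - 2 * γ * μ1 + Lh ^ 2 * γ ^ 2) * ‖θ - f W‖ ^ 2
        + 2 * Lf ^ 2 * Lg ^ 2 * η ^ 2 * ‖θ - f W‖ ^ 2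
        + 2 * Lf ^ 2 * Lg ^ 2 * (Lf + 1) ^ 2 * η ^ 2 * |W - Wstar| ^ 2
        + (Lf ^ 2 * γ ^ 2 + 2 * (1 + Lh * γ) ^ 2 * η ^ 2 * Lg ^ 2 / γ ^ 2) * ‖θ - f W‖ ^ 2
        + 2 * (1 + Lh * γ) ^ 2 * η ^ 2 * Lg ^ 2 * (Lf + 1) ^ 2 / γ ^ 2 * |W - Wstar| ^ 2 := by
  set B := (θ - f W) + γ • h θ W
  set C := f W - f (W + η * g θ W)
  have hh : ‖h θ W‖ ≤ Lh * ‖θ - f W‖ := by simpa [hroot W] using hhLip θ (f W) W W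
  have hB2 : ‖B‖ ^ 2 ≤ (1 - 2 * γ * μ1 + Lh ^ 2 * γ ^ 2) * ‖θ - f W‖ ^ 2 :=
    norm_add_smul_sq_le_of_inner_le hγ.le (hdrift θ W) hh
  have hB : ‖B‖ ≤ (1 + Lh * γ) * ‖θ - f W‖ := norm_add_smul_le_of_norm_le hγ.le hh
  have hC : ‖C‖ ≤ Lf * (|η| * |g θ W|) := by
    simpa [abs_mul] using hfLip W (W + η * g θ W)
  have hC2 : ‖C‖ ^ 2 ≤ Lf ^ 2 * η ^ 2 * |g θ W| ^ 2 := by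
    simpa [mul_pow, sq_abs, mul_assoc] using pow_le_pow_left₀ (norm_nonneg C) hC 2
  have hBC : ‖B‖ * ‖C‖ ≤ (Lf * ‖θ - f W‖) * ((1 + Lh * γ) * |η| * |g θ W|) :=
    (mul_le_mul hB hC (norm_nonneg _) ((norm_nonneg B).trans hB)).trans_eq (by ring)
  have hBC2 := norm_add_sq_le_of_norm_mul_norm_le (pow_pos hγ 2) hBC
  simp only [mul_pow, sq_abs η] at hBC2
  have hG := sq_abs_le_of_lipschitz_of_root hLg hfLip hgLip hWstar θ W
  have hsplit : ∀ ω, θ + γ • (h θ W + ξ ω) - f (W + η * g θ W) = (B + C) + γ • ξ ω :=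
    fun ω => by simp only [B, C, smul_add]; abel
  simp_rw [hsplit]
  rw [integral_norm_add_smul_sq μ _ γ hξint hξsq hξmean]
  calc ‖B + C‖ ^ 2 + γ ^ 2 * ∫ ω, ‖ξ ω‖ ^ 2 ∂μ
      ≤ (1 - 2 * γ * μ1 + Lh ^ 2 * γ ^ 2) * ‖θ - f W‖ ^ 2 + γ ^ 2 * Lf ^ 2 * ‖θ - f W‖ ^ 2
        + ((γ ^ 2)⁻¹ * (1 + Lh * γ) ^ 2 + Lf ^ 2) * η ^ 2 * |g θ W| ^ 2 + γ ^ 2 * Λ := by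
        linarith [mul_le_mul_of_nonneg_left hξvar (sq_nonneg γ)]
    _ ≤ (1 - 2 * γ * μ1 + Lh ^ 2 * γ ^ 2) * ‖θ - f W‖ ^ 2 + γ ^ 2 * Lf ^ 2 * ‖θ - f W‖ ^ 2
        + ((γ ^ 2)⁻¹ * (1 + Lh * γ) ^ 2 + Lf ^ 2) * η ^ 2
          * (2 * Lg ^ 2 * (‖θ - f W‖ ^ 2 + (Lf + 1) ^ 2 * |W - Wstar| ^ 2)) + γ ^ 2 * Λ := by
        gcongr
    _ = _ := by ring

/-- One-step mean-square bound for the fast iterate of a two-timescale stochastic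
approximation: conditioning on the past, the next error `θ' - f W'` satisfies the
stated inequality in expectation over the martingale-difference noise. -/
theorem stmt6 {E : Type*} [NormedAddCommGroup E] [InnerProductSpace ℝ E] [CompleteSpace E]
    {Ω : Type*} [MeasurableSpace Ω] (μ : Measure Ω) [IsProbabilityMeasure μ]
    (f : ℝ → E) (h : E → ℝ → E) (g : E → ℝ → ℝ)
    (Lf Lh Lg μ1 Λ γ η : ℝ) (hγ : 0 < γ) (hη : 0 < η)
    (hLf : 0 ≤ Lf) (hLh : 0 ≤ Lh) (hLg : 0 ≤ Lg) (hμ1 : 0 < μ1) (hΛ : 0 ≤ Λ)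
    (hroot : ∀ W : ℝ, h (f W) W = 0)
    (hfLip : ∀ W W' : ℝ, ‖f W - f W'‖ ≤ Lf * |W - W'|)
    (hhLip : ∀ (θ θ' : E) (W W' : ℝ),
      ‖h θ W - h θ' W'‖ ≤ Lh * (‖θ - θ'‖ + |W - W'|))
    (hdrift : ∀ (θ : E) (W : ℝ),
      (inner ℝ (θ - f W) (h θ W) : ℝ) ≤ -μ1 * ‖θ - f W‖ ^ 2)
    (hgLip : ∀ (θ θ' : E) (W W' : ℝ),
      |g θ W - g θ' W'| ≤ Lg * (‖θ - θ'‖ + |W - W'|))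
    (Wstar : ℝ) (hWstar : g (f Wstar) Wstar = 0)
    (θ : E) (W : ℝ) (ξ : Ω → E)
    (hξint : Integrable ξ μ) (hξsq : Integrable (fun ω => ‖ξ ω‖ ^ 2) μ)
    (hξmean : ∫ ω, ξ ω ∂μ = 0) (hξvar : ∫ ω, ‖ξ ω‖ ^ 2 ∂μ ≤ Λ) :
    ∫ ω, ‖(θ + γ • (h θ W + ξ ω)) - f (W + η * g θ W)‖ ^ 2 ∂μ ≤
      γ ^ 2 * Λ + (1 - 2 * γ * μ1 + Lh ^ 2 * γ ^ 2) * ‖θ - f W‖ ^ 2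
        + 2 * Lf ^ 2 * Lg ^ 2 * η ^ 2 * ‖θ - f W‖ ^ 2
        + 2 * Lf ^ 2 * Lg ^ 2 * (Lf + 1) ^ 2 * η ^ 2 * |W - Wstar| ^ 2
        + (Lf ^ 2 * γ ^ 2 + 2 * (1 + Lh * γ) ^ 2 * η ^ 2 * Lg ^ 2 / γ ^ 2) * ‖θ - f W‖ ^ 2
        + 2 * (1 + Lh * γ) ^ 2 * η ^ 2 * Lg ^ 2 * (Lf + 1) ^ 2 / γ ^ 2 * |W - Wstar| ^ 2 :=
  stmt6_general μ f h g Lf Lh Lg μ1 Λ γ η hγ hLg hroot hfLip hhLip hdrift hgLip Wstar hWstar θ W ξ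
    hξint hξsq hξmean hξvar
end

section
/- Under the same two-timescale stochastic approximation setting, with the additional strong monotonicity condition $\tilde W_n \, g(\theta_n, W_n) \le -\mu_2 \|\tilde W_n\|^2$, the slow iterate satisfies $\mathbb{E}[\|\tilde W_{n+1}\|^2 | \mathcal{F}_n] \le \|\tilde W_n\|^2 - 2\eta_n \mu_2 \|\tilde W_n\|^2 + 2\eta_n^2 L_g^2 \|\tilde\theta_n\|^2 + 2\eta_n^2 L_g^2 (L_f + 1)^2 \|\tilde W_n\|^2$. -/
/-- One-step bound for the slow iterate of a two-timescale stochastic approximation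
under strong monotonicity of `g` and Lipschitz continuity of `g` and `f`. -/
theorem stmt7 {E : Type*} [NormedAddCommGroup E]
    (f : ℝ → E) (g : E → ℝ → ℝ) (Lf Lg μ2 η : ℝ)
    (hLf : 0 ≤ Lf) (hLg : 0 ≤ Lg) (hμ2 : 0 < μ2) (hη : 0 < η)
    (hfLip : ∀ W W' : ℝ, ‖f W - f W'‖ ≤ Lf * |W - W'|)
    (hgLip : ∀ (θ θ' : E) (W W' : ℝ),
      |g θ W - g θ' W'| ≤ Lg * (‖θ - θ'‖ + |W - W'|))
    (Wstar : ℝ) (hWstar : g (f Wstar) Wstar = 0)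
    (θ : E) (W : ℝ)
    (hmono : (W - Wstar) * g θ W ≤ -μ2 * (W - Wstar) ^ 2) :
    |W + η * g θ W - Wstar| ^ 2 ≤
      (W - Wstar) ^ 2 - 2 * η * μ2 * (W - Wstar) ^ 2
        + 2 * η ^ 2 * Lg ^ 2 * ‖θ - f W‖ ^ 2
        + 2 * η ^ 2 * Lg ^ 2 * (Lf + 1) ^ 2 * (W - Wstar) ^ 2 := by
  have hg : |g θ W| ≤ Lg * (‖θ - f W‖ + (Lf + 1) * |W - Wstar|) := by
    have h1 : |g θ W - g (f Wstar) Wstar| ≤ Lg * (‖θ - f Wstar‖ + |W - Wstar|) :=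
      hgLip θ (f Wstar) W Wstar
    have h2 : ‖θ - f Wstar‖ ≤ ‖θ - f W‖ + Lf * |W - Wstar| := by
      calc ‖θ - f Wstar‖ = ‖(θ - f W) + (f W - f Wstar)‖ := by rw [sub_add_sub_cancel]
        _ ≤ ‖θ - f W‖ + ‖f W - f Wstar‖ := norm_add_le _ _
        _ ≤ ‖θ - f W‖ + Lf * |W - Wstar| := by linarith [hfLip W Wstar]
    rw [hWstar, sub_zero] at h1
    calc |g θ W| ≤ Lg * (‖θ - f Wstar‖ + |W - Wstar|) := h1
      _ ≤ Lg * (‖θ - f W‖ + (Lf + 1) * |W - Wstar|) := by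
          apply mul_le_mul_of_nonneg_left _ hLg; nlinarith
  have hg2 : (g θ W) ^ 2 ≤ 2 * Lg ^ 2 * ‖θ - f W‖ ^ 2
      + 2 * Lg ^ 2 * (Lf + 1) ^ 2 * (W - Wstar) ^ 2 := by
    have h := sq_le_sq' (neg_le_of_abs_le hg) (le_of_abs_le hg) (a := g θ W)
    have hn : (0:ℝ) ≤ ‖θ - f W‖ := norm_nonneg _
    have ha : |W - Wstar| ^ 2 = (W - Wstar) ^ 2 := sq_abs _
    have habs : (0:ℝ) ≤ |W - Wstar| := abs_nonneg _
    rw [← ha]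
    nlinarith [mul_nonneg (sq_nonneg Lg) (sq_nonneg (‖θ - f W‖ - (Lf+1) * |W - Wstar|))]
  have key : (W + η * g θ W - Wstar) ^ 2 ≤
      (W - Wstar) ^ 2 - 2 * η * μ2 * (W - Wstar) ^ 2
        + 2 * η ^ 2 * Lg ^ 2 * ‖θ - f W‖ ^ 2
        + 2 * η ^ 2 * Lg ^ 2 * (Lf + 1) ^ 2 * (W - Wstar) ^ 2 := by
    nlinarith [sq_nonneg η, mul_le_mul_of_nonneg_left hg2 (sq_nonneg η)]
  rw [sq_abs]; exact key
end
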